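/- Boundary restriction does not increase reduced weight: Let H_X ∈ 𝔽₂^{m_X×n}, H_Z ∈ 𝔽₂^{m_Z×n}, and ℓ ≥ 2, and form the thickened matrix H̃_X. For every ṽ ∈ 𝔽₂^{nℓ+m_X(ℓ−1)}, its boundary restriction v := ṽ^{(1)} ∈ 𝔽₂ⁿ satisfies ‖v‖_{H_X} ≤ ‖ṽ‖_{H̃_X}. -/

import Mathlib

open Matrix Kronecker

/-- The row space of a matrix over 𝔽₂: the span of its rows. -/
def rowSpace {m n : Type*} (A : Matrix m n (ZMod 2)) :
    Submodule (ZMod 2) (n → ZMod 2) :=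
  Submodule.span (ZMod 2) (Set.range A)

/-- The reduced weight of a vector `v` relative to a matrix `A`:
`‖v‖_A = min { |v+u| : u ∈ rs(A) }`. -/
noncomputable def redW {m n : Type*} [Fintype n] (A : Matrix m n (ZMod 2))
    (v : n → ZMod 2) : ℕ :=
  sInf {k | ∃ u ∈ rowSpace A, hammingNorm (v + u) = k}

/-- `H` is `(t,f)`-sound relative to `A`. -/
def Sound {m n a : Type*} [Fintype m] [Fintype n] (t : ℕ) (f : ℕ → ℝ)
    (H : Matrix m n (ZMod 2)) (A : Matrix a n (ZMod 2)) : Prop :=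
  ∀ s : m → ZMod 2, (∃ e, H.mulVec e = s) → hammingNorm s ≤ t →
    ∃ e, H.mulVec e = s ∧ (redW A e : ℝ) ≤ f (hammingNorm s)

/-- `H` is `(t,f)`-confined relative to `A`. -/
def Confined {m n a : Type*} [Fintype m] [Fintype n] (t : ℕ) (f : ℕ → ℝ)
    (H : Matrix m n (ZMod 2)) (A : Matrix a n (ZMod 2)) : Prop :=
  ∀ e : n → ZMod 2, redW A e ≤ t → (redW A e : ℝ) ≤ f (hammingNorm (H.mulVec e))

/-- Parity-check matrix of the length-`ℓ` repetition code. -/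
def repH (ℓ : ℕ) : Matrix (Fin (ℓ - 1)) (Fin ℓ) (ZMod 2) :=
  Matrix.of fun j i => if i.val = j.val ∨ i.val = j.val + 1 then 1 else 0

/-- Thickened X-check matrix `H̃_X = ( H_X⊗I_ℓ | I_{m_X}⊗hᵀ )`. -/
def thickHX {mX n : ℕ} (HX : Matrix (Fin mX) (Fin n) (ZMod 2)) (ℓ : ℕ) :
    Matrix (Fin mX × Fin ℓ) ((Fin n × Fin ℓ) ⊕ (Fin mX × Fin (ℓ - 1))) (ZMod 2) :=
  Matrix.fromCols (HX ⊗ₖ (1 : Matrix (Fin ℓ) (Fin ℓ) (ZMod 2)))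
    ((1 : Matrix (Fin mX) (Fin mX) (ZMod 2)) ⊗ₖ (repH ℓ)ᵀ)

/-- Thickened Z-check matrix `H̃_Z = [[ H_Z⊗I_ℓ , 0 ],[ I_n⊗h , H_Xᵀ⊗I_{ℓ−1} ]]`. -/
def thickHZ {mX mZ n : ℕ} (HX : Matrix (Fin mX) (Fin n) (ZMod 2))
    (HZ : Matrix (Fin mZ) (Fin n) (ZMod 2)) (ℓ : ℕ) :
    Matrix ((Fin mZ × Fin ℓ) ⊕ (Fin n × Fin (ℓ - 1)))
      ((Fin n × Fin ℓ) ⊕ (Fin mX × Fin (ℓ - 1))) (ZMod 2) :=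
  Matrix.fromBlocks (HZ ⊗ₖ (1 : Matrix (Fin ℓ) (Fin ℓ) (ZMod 2))) 0
    ((1 : Matrix (Fin n) (Fin n) (ZMod 2)) ⊗ₖ repH ℓ)
    (HXᵀ ⊗ₖ (1 : Matrix (Fin (ℓ - 1)) (Fin (ℓ - 1)) (ZMod 2)))

/-- Metacheck matrix `M̃_Z = ( I_{m_Z}⊗h | H_Z⊗I_{ℓ−1} )`. -/
def metaMZ {mZ n : ℕ} (HZ : Matrix (Fin mZ) (Fin n) (ZMod 2)) (ℓ : ℕ) :
    Matrix (Fin mZ × Fin (ℓ - 1))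
      ((Fin mZ × Fin ℓ) ⊕ (Fin n × Fin (ℓ - 1))) (ZMod 2) :=
  Matrix.fromCols ((1 : Matrix (Fin mZ) (Fin mZ) (ZMod 2)) ⊗ₖ repH ℓ)
    (HZ ⊗ₖ (1 : Matrix (Fin (ℓ - 1)) (Fin (ℓ - 1)) (ZMod 2)))

/-- Sheet-`τ` component of a vector on the thickened qubit space. -/
def sheet {n ℓ mX : ℕ} (τ : Fin ℓ)
    (v : (Fin n × Fin ℓ) ⊕ (Fin mX × Fin (ℓ - 1)) → ZMod 2) : Fin n → ZMod 2 :=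
  fun i => v (Sum.inl (i, τ))


/-! Restricting to sheet `τ` sends the row `(j, σ)` of `H̃_X` to `HX j` when `σ = τ` and to `0`
otherwise, so it maps `rs(H̃_X)` into `rs(HX)`; being a projection onto coordinates it does not
increase Hamming weight. Hence it maps an optimal representative `v + u` of `v` to a competitor
for the reduced weight of the restriction. -/

lemma hammingNorm_comp_le_of_injective {ι κ β : Type*} [Fintype ι] [Fintype κ]
    [DecidableEq β] [Zero β] {f : ι → κ} (hf : f.Injective) (x : κ → β) :
    hammingNorm (x ∘ f) ≤ hammingNorm x :=
  Finset.card_le_card_of_injOn f (fun i hi => by simpa using hi) hf.injOn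

section ReducedWeight

variable {m m' n n' : Type*}

lemma redW_le_hammingNorm_add [Fintype n] {A : Matrix m n (ZMod 2)} {u : n → ZMod 2}
    (hu : u ∈ rowSpace A) (v : n → ZMod 2) : redW A v ≤ hammingNorm (v + u) :=
  Nat.sInf_le ⟨u, hu, rfl⟩

lemma exists_hammingNorm_add_eq_redW [Fintype n] (A : Matrix m n (ZMod 2)) (v : n → ZMod 2) :
    ∃ u ∈ rowSpace A, hammingNorm (v + u) = redW A v :=
  Nat.sInf_mem (s := {k | ∃ u ∈ rowSpace A, hammingNorm (v + u) = k})
    ⟨hammingNorm v, 0, Submodule.zero_mem _, by rw [add_zero]⟩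

lemma comp_mem_rowSpace {A : Matrix m n (ZMod 2)} {B : Matrix m' n' (ZMod 2)} {f : n' → n}
    (hrows : ∀ j, A j ∘ f ∈ rowSpace B) {u : n → ZMod 2} (hu : u ∈ rowSpace A) :
    u ∘ f ∈ rowSpace B := by
  have : (rowSpace A).map (LinearMap.funLeft (ZMod 2) (ZMod 2) f) ≤ rowSpace B := by
    rw [rowSpace, Submodule.map_span_le]
    rintro _ ⟨j, rfl⟩
    exact hrows j
  exact this ⟨u, hu, rfl⟩

lemma redW_comp_le [Fintype n] [Fintype n'] {A : Matrix m n (ZMod 2)}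
    {B : Matrix m' n' (ZMod 2)} {f : n' → n}
    (hf : f.Injective) (hrows : ∀ j, A j ∘ f ∈ rowSpace B) (v : n → ZMod 2) :
    redW B (v ∘ f) ≤ redW A v := by
  obtain ⟨u, hu, hvu⟩ := exists_hammingNorm_add_eq_redW A v
  calc redW B (v ∘ f) ≤ hammingNorm (v ∘ f + u ∘ f) :=
        redW_le_hammingNorm_add (comp_mem_rowSpace hrows hu) _
    _ = hammingNorm ((v + u) ∘ f) := rfl
    _ ≤ hammingNorm (v + u) := hammingNorm_comp_le_of_injective hf _
    _ = redW A v := hvu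

end ReducedWeight

lemma sheet_thickHX_row {mX n ℓ : ℕ} (HX : Matrix (Fin mX) (Fin n) (ZMod 2)) (j : Fin mX)
    (σ τ : Fin ℓ) : sheet τ (thickHX HX ℓ (j, σ)) = if σ = τ then HX j else 0 := by
  ext i
  split_ifs with h <;> simp [sheet, thickHX, h]

lemma redW_sheet_le {mX n ℓ : ℕ} (HX : Matrix (Fin mX) (Fin n) (ZMod 2)) (τ : Fin ℓ)
    (v : (Fin n × Fin ℓ) ⊕ (Fin mX × Fin (ℓ - 1)) → ZMod 2) :
    redW HX (sheet τ v) ≤ redW (thickHX HX ℓ) v := by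
  refine redW_comp_le (f := fun i => Sum.inl (i, τ)) (fun _ _ h => by simpa using h)
    (fun ⟨j, σ⟩ => ?_) v
  change sheet τ (thickHX HX ℓ (j, σ)) ∈ rowSpace HX
  rw [sheet_thickHX_row]
  split_ifs
  · exact Submodule.subset_span ⟨j, rfl⟩
  · exact Submodule.zero_mem _

theorem boundary_restriction_redW
    {mX n : ℕ}
    (HX : Matrix (Fin mX) (Fin n) (ZMod 2))
    (ℓ : ℕ) (hℓ : 2 ≤ ℓ)
    (v : (Fin n × Fin ℓ) ⊕ (Fin mX × Fin (ℓ - 1)) → ZMod 2) :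
    redW HX (sheet (⟨0, by omega⟩ : Fin ℓ) v) ≤ redW (thickHX HX ℓ) v :=
  redW_sheet_le HX _ v
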